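/- arXiv:2311.08911 — 3 statements merged into one kernel-verified Lean document; each statement's English description precedes it below -/
import Mathlib

section
/- For all natural numbers n and m with n ≥ 1 and m ≤ n − 1, the following identity of real numbers holds: Σ_{t=0}^{m} binom(m,t) · t! · (n−1−t)! / n! = 1/(n−m). -/
/-!
Write `n = m + k + 1`. Since `C(m,t)·t!·(k+m-t)! = m!·k!·C(m-t+k, k)`, the hockey-stick identity
sums the numerators to `m!·k!·C(m+k+1, k+1) = n!/(k+1)`, and `k + 1 = n - m`.
-/

open Finset Nat

theorem choose_mul_factorial_mul_factorial_add_sub (k : ℕ) {m t : ℕ} (ht : t ≤ m) :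
    m.choose t * t ! * (k + m - t)! = m ! * k ! * (m - t + k).choose k := by
  rw [show k + m - t = m - t + k by omega, ← add_choose_mul_factorial_mul_factorial (m - t) k,
    ← choose_mul_factorial_mul_factorial ht]
  ring

theorem sum_choose_mul_factorial_mul_factorial_add_sub (k m : ℕ) :
    ∑ t ∈ range (m + 1), m.choose t * t ! * (k + m - t)! = m ! * k ! * (m + k + 1).choose (k + 1) := by
  calc ∑ t ∈ range (m + 1), m.choose t * t ! * (k + m - t)!
      = m ! * k ! * ∑ t ∈ range (m + 1), (m + 1 - 1 - t + k).choose k := by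
        rw [mul_sum]
        refine sum_congr rfl fun t ht => ?_
        rw [choose_mul_factorial_mul_factorial_add_sub k (by simpa [Nat.lt_succ_iff] using ht),
          Nat.add_sub_cancel]
    _ = m ! * k ! * (m + k + 1).choose (k + 1) := by
        rw [sum_range_reflect (fun s => (s + k).choose k), sum_range_add_choose]

theorem succ_mul_sum_choose_mul_factorial_mul_factorial_add_sub (k m : ℕ) :
    (k + 1) * ∑ t ∈ range (m + 1), m.choose t * t ! * (k + m - t)! = (m + k + 1)! := by
  rw [sum_choose_mul_factorial_mul_factorial_add_sub, add_assoc m k 1,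
    ← add_choose_mul_factorial_mul_factorial m (k + 1), factorial_succ k]
  ring

/-- For `n ≥ 1` and `m ≤ n − 1`, the total Shapley coefficient weight of all
subsets of a fixed `m`-element set in an `n`-player game equals `1/(n−m)`:
`Σ_{t=0}^{m} C(m,t)·t!·(n−1−t)!/n! = 1/(n−m)`. -/
theorem shapley_coeff_sum (n m : ℕ) (hn : 1 ≤ n) (hm : m ≤ n - 1) :
    ∑ t ∈ Finset.range (m + 1),
      ((m.choose t : ℝ) * (t.factorial : ℝ) * ((n - 1 - t).factorial : ℝ))
        / (n.factorial : ℝ)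
      = 1 / ((n : ℝ) - (m : ℝ)) := by
  obtain ⟨k, rfl⟩ : ∃ k, n = m + k + 1 := ⟨n - 1 - m, by omega⟩
  have hsum : ((k : ℝ) + 1) * ∑ t ∈ range (m + 1), (m.choose t : ℝ) * t ! * (k + m - t)!
      = (m + k + 1)! := by
    exact_mod_cast succ_mul_sum_choose_mul_factorial_mul_factorial_add_sub k m
  have hgap : ((m + k + 1 : ℕ) : ℝ) - m = k + 1 := by push_cast; ring
  rw [← sum_div, hgap, show m + k + 1 - 1 = k + m by omega]
  field_simp
  linarith
end

section
/- Let N be a nonempty finite set of players, let b be a player not in N, and let v be a characteristic function assigning a real number to every subset of N ∪ {b}. If b is a null player, i.e. v(S ∪ {b}) = v(S) for every S ⊆ N, then for every i ∈ N the Shapley value of i in the game on N ∪ {b} equals the Shapley value of i in the game on N with v restricted to subsets of N: φ_i(N∪{b}, v) = φ_i(N, v|_N). -/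
open Finset

/-- The Shapley value of player `i` in the game `(N, v)`:
`φ_i(N,v) = Σ_{S ⊆ N\{i}} [|S|!·(|N|−|S|−1)!/|N|!]·(v(S∪{i}) − v(S))`. -/
noncomputable def shapley {α : Type*} [DecidableEq α]
    (N : Finset α) (v : Finset α → ℝ) (i : α) : ℝ :=
  ∑ S ∈ (N.erase i).powerset,
    ((S.card.factorial * (N.card - S.card - 1).factorial : ℝ) / (N.card.factorial : ℝ))
      * (v (insert i S) - v S)

/-! Split the coalitions of `(N ∪ {b}) \ {i}` into the coalitions `S ⊆ N \ {i}`
and their extensions `S ∪ {b}`. Since `b` is null, `i` contributes the same to both, and the two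
weights with `n + 1` players add up to the weight of `S` with `n` players:
`s! (n-s)! / (n+1)! + (s+1)! (n-s-1)! / (n+1)! = s! (n-s-1)! / n!`. -/

noncomputable def shapleyWeight (n s : ℕ) : ℝ :=
  (s.factorial * (n - s - 1).factorial : ℝ) / (n.factorial : ℝ)

theorem shapley_eq_sum_shapleyWeight {α : Type*} [DecidableEq α]
    (N : Finset α) (v : Finset α → ℝ) (i : α) :
    shapley N v i =
      ∑ S ∈ (N.erase i).powerset, shapleyWeight N.card S.card * (v (insert i S) - v S) :=
  rfl

theorem shapleyWeight_succ_add_shapleyWeight_succ {n s : ℕ} (h : s < n) :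
    shapleyWeight (n + 1) s + shapleyWeight (n + 1) (s + 1) = shapleyWeight n s := by
  obtain ⟨k, rfl⟩ : ∃ k, n = s + k + 1 := ⟨n - s - 1, by omega⟩
  have hk₁ : s + k + 1 + 1 - s - 1 = k + 1 := by omega
  have hk₂ : s + k + 1 + 1 - (s + 1) - 1 = k := by omega
  have hk₃ : s + k + 1 - s - 1 = k := by omega
  simp only [shapleyWeight, hk₁, hk₂, hk₃, Nat.factorial_succ]
  push_cast
  field_simp
  ring

/-- The right-hand side uses `v` itself rather than its restriction to subsets of `N`:
`shapley N v` only evaluates `v` on subsets of `N`. -/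
theorem shapley_null_player_general (α : Type*) [DecidableEq α]
    (N : Finset α) (b : α) (hb : b ∉ N)
    (v : Finset α → ℝ)
    (hnull : ∀ S ⊆ N, v (insert b S) = v S) :
    ∀ i ∈ N, shapley (insert b N) v i = shapley N v i := by
  intro i hi
  have hbi : b ∉ N.erase i := fun h => hb (mem_of_mem_erase h)
  rw [shapley_eq_sum_shapleyWeight, shapley_eq_sum_shapleyWeight,
    erase_insert_of_ne (ne_of_mem_of_not_mem hi hb).symm, card_insert_of_notMem hb,
    sum_powerset_insert hbi, ← sum_add_distrib]
  refine sum_congr rfl fun S hS => ?_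
  have hSN : S ⊆ N.erase i := mem_powerset.mp hS
  have hSN' : S ⊆ N := hSN.trans (erase_subset i N)
  have hcard : S.card < N.card := card_lt_card (hSN.trans_ssubset (erase_ssubset hi))
  rw [insert_comm i b, hnull _ (insert_subset hi hSN'), hnull S hSN',
    card_insert_of_notMem fun h => hbi (hSN h), ← add_mul,
    shapleyWeight_succ_add_shapleyWeight_succ hcard]

/-- Adding a null player `b` (one with `v(S ∪ {b}) = v(S)` for all `S ⊆ N`)
does not change the Shapley value of any other player.  (Since the Shapley
value on `N` only evaluates `v` on subsets of `N`, using `v` itself in the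
right-hand side is the same as using the restriction of `v` to subsets of
`N`.) -/
theorem shapley_null_player (α : Type*) [DecidableEq α]
    (N : Finset α) (hN : N.Nonempty) (b : α) (hb : b ∉ N)
    (v : Finset α → ℝ)
    (hnull : ∀ S ⊆ N, v (insert b S) = v S) :
    ∀ i ∈ N, shapley (insert b N) v i = shapley N v i :=
  shapley_null_player_general α N b hb v hnull
end

section
/- Let V be a finite set of nodes with source s ∈ V, let w assign a nonnegative real cost to each edge (unordered pair of distinct nodes of V), let i ∈ V \ {s}, and let E' ⊆ E be two finite edge sets such that every edge of E \ E' is incident to i. Then for every S ⊆ V \ {s} with i ∉ S such that S ∪ {i} is connectable within E', the marginal connection costs satisfy C_{E'}(S ∪ {i}) − C_{E'}(S) ≥ C_E(S ∪ {i}) − C_E(S): deleting edges incident to i weakly increases i's marginal cost of connecting to the source on top of any coalition S. -/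
/-!
Write `a, b` for the costs `C_E(S ∪ {i}), C_E(S)` and `a', b'` for the same costs within `E'`.
Shrinking the edge set or enlarging the coalition can only raise the cost, so `a ≤ a'`,
`b ≤ b'` and `b' ≤ a'`. The heart of the proof is `min b' a ≤ b`: strip a
connector of `S` within `E` of its redundant edges outside `E'`; what remains either lies in
`E'`, or keeps an edge incident to `i` that some path from the source to `S` needs, and that
path already reaches `i`. If `b' ≤ b` then `b = b'` and the claim is `a ≤ a'`; if `a ≤ b`
then the left side is `≤ 0 ≤ a' - b'`.
-/

open Finset

/-- The edge set `F` connects every node of `S` to the source `src`: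
in the graph with edge set `F`, every node of `S` is reachable from `src`. -/
def Connects {α : Type*} (src : α) (F : Finset (Sym2 α)) (S : Finset α) : Prop :=
  ∀ i ∈ S, (SimpleGraph.fromEdgeSet (↑F : Set (Sym2 α))).Reachable src i

/-- `S` is connectable within the available edge set `E`: some `F ⊆ E`
connects every node of `S` to the source. -/
def Connectable {α : Type*} (src : α) (E : Finset (Sym2 α)) (S : Finset α) : Prop :=
  ∃ F ⊆ E, Connects src F S

/-- The minimum cost `C_E(S)` of connecting `S` to the source `src` using
edges from `E` with edge costs `w`. -/
noncomputable def connCost {α : Type*} (src : α) (w : Sym2 α → ℝ)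
    (E : Finset (Sym2 α)) (S : Finset α) : ℝ :=
  sInf {x : ℝ | ∃ F ⊆ E, Connects src F S ∧ x = ∑ e ∈ F, w e}

open SimpleGraph

section Connects

variable {α : Type*} {src : α}

lemma Connects.anti {F : Finset (Sym2 α)} {S T : Finset α} (hST : S ⊆ T)
    (hF : Connects src F T) : Connects src F S := fun j hj => hF j (hST hj)

lemma Connects.insert [DecidableEq α] {F : Finset (Sym2 α)} {S : Finset α} {i : α}
    (hF : Connects src F S) (hi : (fromEdgeSet (↑F : Set (Sym2 α))).Reachable src i) :
    Connects src F (insert i S) := by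
  intro j hj
  rcases Finset.mem_insert.mp hj with rfl | hjS
  · exact hi
  · exact hF j hjS

lemma Connects.reachable_of_not_connects_erase [DecidableEq α] {F : Finset (Sym2 α)}
    {S : Finset α} {e : Sym2 α} {x : α} (hF : Connects src F S)
    (he : ¬ Connects src (F.erase e) S) (hx : x ∈ e) :
    (fromEdgeSet (↑F : Set (Sym2 α))).Reachable src x := by
  simp only [Connects, not_forall, exists_prop] at he
  obtain ⟨j, hjS, hj⟩ := he
  obtain ⟨p⟩ := hF j hjS
  have hep : e ∈ p.edges := by
    by_contra hep
    refine hj ⟨p.transfer _ fun e' he' => ?_⟩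
    have he'F := p.edges_subset_edgeSet he'
    rw [edgeSet_fromEdgeSet] at he'F ⊢
    have he'e : e' ≠ e := fun h => hep (h ▸ he')
    exact ⟨by simpa [he'e] using he'F.1, he'F.2⟩
  exact ⟨p.takeUntil x (p.mem_support_of_mem_edges hep hx)⟩

lemma Connects.exists_subset_subset_or_reachable [DecidableEq α] {E' : Finset (Sym2 α)}
    {i : α} {S : Finset α} {F : Finset (Sym2 α)} (hinc : ∀ e ∈ F, e ∉ E' → i ∈ e)
    (hF : Connects src F S) :
    ∃ T ⊆ F, Connects src T S ∧
      (T ⊆ E' ∨ (fromEdgeSet (↑T : Set (Sym2 α))).Reachable src i) := by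
  induction F using Finset.strongInduction with
  | H F ih =>
    by_cases hFE' : F ⊆ E'
    · exact ⟨F, subset_rfl, hF, Or.inl hFE'⟩
    obtain ⟨e, heF, heE'⟩ := Finset.not_subset.mp hFE'
    by_cases hce : Connects src (F.erase e) S
    · obtain ⟨T, hTF, hT, hT'⟩ := ih (F.erase e) (Finset.erase_ssubset heF)
        (fun e' he' => hinc e' (Finset.mem_of_mem_erase he')) hce
      exact ⟨T, hTF.trans (F.erase_subset e), hT, hT'⟩
    · exact ⟨F, subset_rfl, hF,
        Or.inr (hF.reachable_of_not_connects_erase hce (hinc e heF heE'))⟩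

lemma Connectable.mono {E E' : Finset (Sym2 α)} {S : Finset α} (hEE' : E ⊆ E')
    (hS : Connectable src E S) : Connectable src E' S :=
  let ⟨F, hFE, hF⟩ := hS
  ⟨F, hFE.trans hEE', hF⟩

lemma Connectable.anti {E : Finset (Sym2 α)} {S T : Finset α} (hST : S ⊆ T)
    (hT : Connectable src E T) : Connectable src E S :=
  let ⟨F, hFE, hF⟩ := hT
  ⟨F, hFE, hF.anti hST⟩

end Connects

section connCost

variable {α : Type*} {src : α} {w : Sym2 α → ℝ} {E : Finset (Sym2 α)} {S : Finset α}

lemma connCost_le (hw : ∀ e ∈ E, 0 ≤ w e) {F : Finset (Sym2 α)} (hFE : F ⊆ E)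
    (hF : Connects src F S) : connCost src w E S ≤ ∑ e ∈ F, w e := by
  refine csInf_le ⟨0, ?_⟩ ⟨F, hFE, hF, rfl⟩
  rintro x ⟨G, hGE, -, rfl⟩
  exact Finset.sum_nonneg fun e he => hw e (hGE he)

lemma le_connCost {c : ℝ} (hS : Connectable src E S)
    (hc : ∀ F ⊆ E, Connects src F S → c ≤ ∑ e ∈ F, w e) : c ≤ connCost src w E S := by
  obtain ⟨F, hFE, hF⟩ := hS
  refine le_csInf ⟨_, F, hFE, hF, rfl⟩ ?_
  rintro x ⟨G, hGE, hG, rfl⟩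
  exact hc G hGE hG

lemma connCost_anti_edges {E' : Finset (Sym2 α)} (hE'E : E' ⊆ E) (hw : ∀ e ∈ E, 0 ≤ w e)
    (hS : Connectable src E' S) : connCost src w E S ≤ connCost src w E' S :=
  le_connCost hS fun _ hFE' hF => connCost_le hw (hFE'.trans hE'E) hF

lemma connCost_mono_nodes {T : Finset α} (hST : S ⊆ T) (hw : ∀ e ∈ E, 0 ≤ w e)
    (hT : Connectable src E T) : connCost src w E S ≤ connCost src w E T :=
  le_connCost hT fun _ hFE hF => connCost_le hw hFE (hF.anti hST)

lemma min_connCost_le_connCost [DecidableEq α] {E' : Finset (Sym2 α)} {i : α}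
    (hE'E : E' ⊆ E) (hw : ∀ e ∈ E, 0 ≤ w e) (hinc : ∀ e ∈ E \ E', i ∈ e)
    (hS : Connectable src E S) :
    min (connCost src w E' S) (connCost src w E (insert i S)) ≤ connCost src w E S := by
  refine le_connCost hS fun F hFE hF => ?_
  obtain ⟨T, hTF, hT, hT'⟩ := hF.exists_subset_subset_or_reachable
    (fun e he heE' => hinc e (Finset.mem_sdiff.mpr ⟨hFE he, heE'⟩))
  have hTF_cost : ∑ e ∈ T, w e ≤ ∑ e ∈ F, w e :=
    Finset.sum_le_sum_of_subset_of_nonneg hTF fun e he _ => hw e (hFE he)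
  rcases hT' with hTE' | hi
  · exact (min_le_left _ _).trans
      ((connCost_le (fun e he => hw e (hE'E he)) hTE' hT).trans hTF_cost)
  · exact (min_le_right _ _).trans
      ((connCost_le hw (hTF.trans hFE) (hT.insert hi)).trans hTF_cost)

end connCost

theorem connCost_marginal_antitone_general (α : Type*) [DecidableEq α]
    (src : α)
    (E E' : Finset (Sym2 α)) (hE'E : E' ⊆ E)
    (w : Sym2 α → ℝ) (hw : ∀ e ∈ E, 0 ≤ w e)
    (i : α)
    (hinc : ∀ e ∈ E \ E', i ∈ e)
    (S : Finset α)
    (hconn : Connectable src E' (insert i S)) :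
    connCost src w E (insert i S) - connCost src w E S ≤
      connCost src w E' (insert i S) - connCost src w E' S := by
  have hconnS : Connectable src E' S := hconn.anti (Finset.subset_insert i S)
  have ha := connCost_anti_edges hE'E hw hconn
  have hb := connCost_anti_edges hE'E hw hconnS
  have hb'a' := connCost_mono_nodes (Finset.subset_insert i S)
    (fun e he => hw e (hE'E he)) hconn
  have hkey := min_connCost_le_connCost hE'E hw hinc (hconnS.mono hE'E)
  rcases min_le_iff.mp hkey with hb' | ha' <;> linarith

/-- Deleting edges incident to node `i` weakly increases `i`'s marginal cost of
connecting to the source on top of any coalition `S`: if `E' ⊆ E`, every edge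
of `E \ E'` is incident to `i`, `i ∉ S` and `S ∪ {i}` is connectable within
`E'`, then `C_{E'}(S ∪ {i}) − C_{E'}(S) ≥ C_E(S ∪ {i}) − C_E(S)`. -/
theorem connCost_marginal_antitone (α : Type*) [DecidableEq α]
    (V : Finset α) (src : α) (hsrc : src ∈ V)
    (E E' : Finset (Sym2 α)) (hE'E : E' ⊆ E)
    (hE : ∀ e ∈ E, ¬ e.IsDiag ∧ ∀ x ∈ e, x ∈ V)
    (w : Sym2 α → ℝ) (hw : ∀ e ∈ E, 0 ≤ w e)
    (i : α) (hiV : i ∈ V \ {src})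
    (hinc : ∀ e ∈ E \ E', i ∈ e)
    (S : Finset α) (hSV : S ⊆ V \ {src}) (hiS : i ∉ S)
    (hconn : Connectable src E' (insert i S)) :
    connCost src w E (insert i S) - connCost src w E S ≤
      connCost src w E' (insert i S) - connCost src w E' S :=
  connCost_marginal_antitone_general α src E E' hE'E w hw i hinc S hconn
end
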